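/- For every simple regular expression E over an alphabet α and every word w over α, the union of the languages of the iterated Antimirov partial derivatives of E with respect to w equals the left quotient of L(E) by w: ⋃_{F ∈ ∂_w(E)} L(F) = w⁻¹(L(E)). -/

import Mathlib

open scoped Classical

/-- The Antimirov partial derivative of a regular expression with respect to a symbol. -/
noncomputable def aderiv {α : Type*} (a : α) : RegularExpression α → Set (RegularExpression α)
  | .zero => ∅
  | .epsilon => ∅
  | .char b => if b = a then {1} else ∅
  | .plus E₁ E₂ => aderiv a E₁ ∪ aderiv a E₂
  | .comp E₁ E₂ =>
      if [] ∈ E₁.matches' then ((· * E₂) '' aderiv a E₁) ∪ aderiv a E₂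
      else (· * E₂) '' aderiv a E₁
  | .star E₁ => (· * E₁.star) '' aderiv a E₁

/-- Iterated Antimirov partial derivative with respect to a word. -/
noncomputable def aderivWord {α : Type*} : List α → RegularExpression α → Set (RegularExpression α)
  | [], E => {E}
  | a :: w, E => ⋃ F ∈ aderiv a E, aderivWord w F

/-- Left quotient of a language by a word. -/
def lquot {α : Type*} (w : List α) (L : Language α) : Language α := {v | w ++ v ∈ L}

/-!
The partial derivatives `∂ₐ(E)` split Brzozowski's derivative `E.deriv a` into summands: by
induction on `E`, the union of their languages is `L(E.deriv a)`, which the correctness of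
Mathlib's matcher `RegularExpression.rmatch` identifies with `a⁻¹ L(E)`. Since `∂_{aw}(E)` is the
union of the `∂_w(G)` over `G ∈ ∂ₐ(E)`, induction on the word then gives
`v ∈ L(∂_{aw}(E)) ↔ wv ∈ L(∂ₐ(E)) ↔ awv ∈ L(E)`.
-/

namespace RegularExpression

variable {α : Type*}

def setMatches (S : Set (RegularExpression α)) : Language α := ⋃ F ∈ S, F.matches'

theorem mem_setMatches {S : Set (RegularExpression α)} {x : List α} :
    x ∈ setMatches S ↔ ∃ F ∈ S, x ∈ F.matches' :=
  Set.mem_iUnion₂.trans <| by simp only [exists_prop]; rfl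

theorem setMatches_empty : setMatches (∅ : Set (RegularExpression α)) = 0 :=
  Set.biUnion_empty _

theorem setMatches_singleton (E : RegularExpression α) : setMatches {E} = E.matches' :=
  Set.biUnion_singleton _ _

theorem setMatches_union (S T : Set (RegularExpression α)) :
    setMatches (S ∪ T) = setMatches S + setMatches T :=
  Set.biUnion_union _ _ _

theorem setMatches_image_mul (S : Set (RegularExpression α)) (Q : RegularExpression α) :
    setMatches ((· * Q) '' S) = setMatches S * Q.matches' := by
  ext x
  simp only [mem_setMatches, Set.exists_mem_image, matches'_mul, Language.mem_mul]
  constructor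
  · rintro ⟨F, hF, u, hu, v, hv, rfl⟩
    exact ⟨u, ⟨F, hF, hu⟩, v, hv, rfl⟩
  · rintro ⟨u, ⟨F, hF, hu⟩, v, hv, rfl⟩
    exact ⟨F, hF, u, hu, v, hv, rfl⟩

theorem matchEpsilon_iff [DecidableEq α] (E : RegularExpression α) :
    E.matchEpsilon ↔ [] ∈ E.matches' :=
  E.rmatch_iff_matches' []

theorem mem_matches'_deriv_iff [DecidableEq α] (E : RegularExpression α) (a : α) (x : List α) :
    x ∈ (E.deriv a).matches' ↔ a :: x ∈ E.matches' := by
  rw [← rmatch_iff_matches', ← rmatch_iff_matches']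
  rfl

theorem setMatches_aderiv [DecidableEq α] (a : α) (E : RegularExpression α) :
    setMatches (aderiv a E) = (E.deriv a).matches' := by
  induction E with
  | zero => rw [aderiv, setMatches_empty]; rfl
  | epsilon => rw [aderiv, setMatches_empty]; rfl
  | char b =>
    by_cases hb : b = a
    · subst hb
      rw [aderiv, if_pos rfl, setMatches_singleton, deriv_char_self]
    · rw [aderiv, if_neg hb, setMatches_empty, deriv_char_of_ne hb, matches'_zero]
  | plus P Q ihP ihQ =>
    rw [aderiv, setMatches_union, ihP, ihQ]
    rfl
  | comp P Q ihP ihQ =>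
    by_cases hP : [] ∈ P.matches'
    · rw [aderiv, if_pos hP, setMatches_union, setMatches_image_mul, ihP, ihQ, deriv,
        if_pos ((matchEpsilon_iff P).2 hP)]
      rfl
    · rw [aderiv, if_neg hP, setMatches_image_mul, ihP, deriv,
        if_neg (mt (matchEpsilon_iff P).1 hP)]
      rfl
  | star P ihP =>
    rw [aderiv, setMatches_image_mul, ihP, deriv_star]
    rfl

theorem mem_setMatches_aderiv [DecidableEq α] (a : α) (E : RegularExpression α) (x : List α) :
    x ∈ setMatches (aderiv a E) ↔ a :: x ∈ E.matches' := by
  rw [setMatches_aderiv, mem_matches'_deriv_iff]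

theorem mem_setMatches_aderivWord_cons (a : α) (w : List α) (E : RegularExpression α)
    (x : List α) :
    x ∈ setMatches (aderivWord (a :: w) E) ↔
      ∃ G ∈ aderiv a E, x ∈ setMatches (aderivWord w G) := by
  simp only [aderivWord, mem_setMatches, Set.mem_iUnion, exists_prop]
  constructor
  · rintro ⟨F, ⟨G, hG, hF⟩, hx⟩
    exact ⟨G, hG, F, hF, hx⟩
  · rintro ⟨G, hG, F, hF, hx⟩
    exact ⟨F, ⟨G, hG, hF⟩, hx⟩

end RegularExpression

open RegularExpression in
theorem antimirov_derivWord_lang {α : Type*} (w : List α) (E : RegularExpression α) :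
    ⋃ F ∈ aderivWord w E, F.matches' = lquot w E.matches' := by
  change setMatches _ = _
  induction w generalizing E with
  | nil => exact setMatches_singleton E
  | cons a w ih =>
    ext v
    calc v ∈ setMatches (aderivWord (a :: w) E)
        ↔ ∃ G ∈ aderiv a E, v ∈ setMatches (aderivWord w G) :=
          mem_setMatches_aderivWord_cons a w E v
      _ ↔ ∃ G ∈ aderiv a E, w ++ v ∈ G.matches' := by simp only [ih]; rfl
      _ ↔ w ++ v ∈ setMatches (aderiv a E) := mem_setMatches.symm
      _ ↔ a :: (w ++ v) ∈ E.matches' := mem_setMatches_aderiv a E (w ++ v)
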